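/- arXiv:2509.17515 — 5 statements merged into one kernel-verified Lean document; each statement's English description precedes it below -/
import Mathlib

section
/- Let td denote the formal power series over ℚ defined as the multiplicative inverse of the unit power series Σ_{m≥0} (−1)^m X^m/(m+1)! (formally, td(X) = X/(1 − e^{−X}), which has constant term 1). Then for all natural numbers r, p, a with a ≤ p, the coefficient of X^{r+a} in the power series td^{r+1} · exp(X)^p · (td − X)^a equals the binomial coefficient choose(r+p, p−a). (Equivalently, in the paper's notation, [x^r] td(x)^{r+1} e^{px} (td(x)/x − 1)^a = choose(r+p, p−a).) -/
open PowerSeries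

/-!
Since `td = X / (1 - e^{-X})`, we have `td - X = td e^{-X}`, so the series collapses to
`td^(n+1) e^{qX}` with `n = r + a`, `q = p - a`. Let `c n q` be its coefficient of `X^n`.
The identity `td e^X = td + X e^X` gives Pascal's rule `c (n+1) (q+1) = c (n+1) q + c n (q+1)`,
and `c 0 q = 1`. Finally `c n 0 = 1`: differentiating `td - X = td e^{-X}` gives
`td^2 e^{-X} = td - X td'`, and the coefficient of `X^(n+1)` in `td^(n+2) e^{-X}` is then
`[X^(n+1)] td^(n+1) - [X^n] td^n td' = 0`, as `(td^(n+1))' = (n+1) td^n td'`.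
-/

/-- The Todd power series `td(X) = X / (1 - e^{-X})`, defined as the multiplicative
inverse of the unit power series `Σ_{m ≥ 0} (-1)^m X^m / (m+1)!`. -/
noncomputable def tdSeries : PowerSeries ℚ :=
  (PowerSeries.mk fun m => ((-1 : ℚ) ^ m / (m + 1).factorial))⁻¹

theorem PowerSeries.coeff_pow_mul_derivative {R : Type*} [CommRing R] [IsAddTorsionFree R]
    (f : R⟦X⟧) (n : ℕ) : coeff n (f ^ n * d⁄dX R f) = coeff (n + 1) (f ^ (n + 1)) := by
  apply nsmul_right_injective n.succ_ne_zero
  have h := coeff_derivative (f ^ (n + 1)) n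
  rw [derivative_pow, Nat.add_sub_cancel, mul_assoc, ← Nat.cast_add_one, ← map_natCast C,
    coeff_C_mul] at h
  simpa [nsmul_eq_mul, mul_comm] using h

theorem PowerSeries.derivative_evalNegHom_exp (A : Type*) [CommRing A] [Algebra ℚ A] :
    d⁄dX A (evalNegHom (exp A)) = -evalNegHom (exp A) := by
  have h := congrArg (d⁄dX A) (exp_mul_exp_neg_eq_one (A := A))
  rw [Derivation.leibniz, derivative_exp, derivative_one, smul_eq_mul, smul_eq_mul] at h
  linear_combination evalNegHom (exp A) * h
    - (d⁄dX A (evalNegHom (exp A)) + evalNegHom (exp A)) * exp_mul_exp_neg_eq_one (A := A)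

theorem Nat.eq_choose_of_pascal {R : Type*} [Semiring R] (c : ℕ → ℕ → R)
    (hn : ∀ n, c n 0 = 1) (hq : ∀ q, c 0 q = 1)
    (hpascal : ∀ n q, c (n + 1) (q + 1) = c (n + 1) q + c n (q + 1)) (n q : ℕ) :
    c n q = (n + q).choose q := by
  induction q generalizing n with
  | zero => simp [hn]
  | succ q ihq =>
    induction n with
    | zero => simp [hq]
    | succ n ihn =>
      rw [hpascal, ihq, ihn, show n + 1 + (q + 1) = (n + 1 + q) + 1 by omega,
        Nat.choose_succ_succ', show n + (q + 1) = n + 1 + q by omega, Nat.cast_add, add_comm]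

noncomputable def tdSeriesInv : PowerSeries ℚ :=
  PowerSeries.mk fun m => ((-1 : ℚ) ^ m / (m + 1).factorial)

theorem constantCoeff_tdSeriesInv : constantCoeff tdSeriesInv = 1 := by
  simp [tdSeriesInv]

theorem tdSeries_mul_tdSeriesInv : tdSeries * tdSeriesInv = 1 :=
  PowerSeries.inv_mul_cancel _ (by simp)

theorem constantCoeff_tdSeries : constantCoeff tdSeries = 1 := by
  simpa [constantCoeff_tdSeriesInv] using congrArg constantCoeff tdSeries_mul_tdSeriesInv

theorem X_mul_tdSeriesInv : X * tdSeriesInv = 1 - evalNegHom (exp ℚ) := by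
  ext n
  cases n with
  | zero => simp [evalNegHom, coeff_rescale, coeff_zero_X_mul, -coeff_zero_eq_constantCoeff]
  | succ n =>
    rw [coeff_succ_X_mul, tdSeriesInv, coeff_mk, map_sub, coeff_one, if_neg n.succ_ne_zero,
      evalNegHom, coeff_rescale, coeff_exp]
    simp [pow_succ, div_eq_mul_inv]

theorem tdSeries_mul_one_sub_exp_neg : tdSeries * (1 - evalNegHom (exp ℚ)) = X := by
  linear_combination X * tdSeries_mul_tdSeriesInv - tdSeries * X_mul_tdSeriesInv

theorem tdSeries_sub_X : tdSeries - X = tdSeries * evalNegHom (exp ℚ) := by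
  linear_combination tdSeries_mul_one_sub_exp_neg

theorem tdSeries_mul_exp : tdSeries * exp ℚ = tdSeries + X * exp ℚ := by
  linear_combination
    exp ℚ * tdSeries_mul_one_sub_exp_neg + tdSeries * exp_mul_exp_neg_eq_one (A := ℚ)

theorem tdSeries_sq_mul_exp_neg :
    tdSeries ^ 2 * evalNegHom (exp ℚ) = tdSeries - X * d⁄dX ℚ tdSeries := by
  have h := congrArg (d⁄dX ℚ) tdSeries_sub_X
  rw [map_sub, derivative_X, Derivation.leibniz, derivative_evalNegHom_exp, smul_eq_mul,
    smul_eq_mul] at h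
  linear_combination tdSeries * h - d⁄dX ℚ tdSeries * tdSeries_mul_one_sub_exp_neg

theorem coeff_tdSeries_pow_self (n : ℕ) : coeff n (tdSeries ^ (n + 1)) = 1 := by
  induction n with
  | zero => simp [constantCoeff_tdSeries]
  | succ n ih =>
    have hvanish : coeff (n + 1) (tdSeries ^ (n + 2) * evalNegHom (exp ℚ)) = 0 := by
      rw [show tdSeries ^ (n + 2) * evalNegHom (exp ℚ)
          = tdSeries ^ (n + 1) - X * (tdSeries ^ n * d⁄dX ℚ tdSeries) by
          linear_combination tdSeries ^ n * tdSeries_sq_mul_exp_neg,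
        map_sub, coeff_succ_X_mul, coeff_pow_mul_derivative, sub_self]
    rw [show tdSeries ^ (n + 1 + 1)
          = X * tdSeries ^ (n + 1) + tdSeries ^ (n + 2) * evalNegHom (exp ℚ) by
        linear_combination tdSeries ^ (n + 1) * tdSeries_sub_X,
      map_add, coeff_succ_X_mul, ih, hvanish, add_zero]

theorem coeff_tdSeries_pow_mul_exp_pow (n q : ℕ) :
    coeff n (tdSeries ^ (n + 1) * exp ℚ ^ q) = (n + q).choose q := by
  refine Nat.eq_choose_of_pascal (fun n q => coeff n (tdSeries ^ (n + 1) * exp ℚ ^ q))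
    (by simp [coeff_tdSeries_pow_self]) (by simp [constantCoeff_tdSeries]) (fun n q => ?_) n q
  rw [show tdSeries ^ (n + 1 + 1) * exp ℚ ^ (q + 1)
      = tdSeries ^ (n + 1 + 1) * exp ℚ ^ q + X * (tdSeries ^ (n + 1) * exp ℚ ^ (q + 1)) by
      linear_combination tdSeries ^ (n + 1) * exp ℚ ^ q * tdSeries_mul_exp,
    map_add, coeff_succ_X_mul]

theorem coeff_td_pow_exp_pow (r p a : ℕ) (h : a ≤ p) :
    PowerSeries.coeff (R := ℚ) (r + a)
      (tdSeries ^ (r + 1) * (PowerSeries.exp ℚ) ^ p * (tdSeries - PowerSeries.X) ^ a)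
      = ((r + p).choose (p - a) : ℚ) := by
  obtain ⟨q, rfl⟩ := Nat.exists_eq_add_of_le h
  have hcollapse : tdSeries ^ (r + 1) * exp ℚ ^ (a + q) * (tdSeries - X) ^ a
      = tdSeries ^ (r + a + 1) * exp ℚ ^ q * (exp ℚ * evalNegHom (exp ℚ)) ^ a := by
    rw [tdSeries_sub_X]
    ring
  rw [hcollapse, exp_mul_exp_neg_eq_one, one_pow, mul_one, coeff_tdSeries_pow_mul_exp_pow,
    Nat.add_sub_cancel_left, show r + a + q = r + (a + q) by omega]
end

section
/- Let td denote the formal power series over ℚ defined as the multiplicative inverse of the unit power series Σ_{m≥0} (−1)^m X^m/(m+1)! (formally, td(X) = X/(1 − e^{−X})). Then for all natural numbers r, p, a with a > p, the coefficient of X^{r+a} in the power series td^{r+1} · exp(X)^p · (td − X)^a equals 0. (This is the vanishing case of the convention that choose(r+p, p−a) is zero when the lower entry is negative.) -/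
open PowerSeries

/-!
With `S = (1 - e^{-X}) / X` we have `td = S⁻¹` and `td - X = td · e^{-X}`, so the series is
`td ^ (n + 1) · e^{-mX}` with `n = r + a` and `m = a - p ∈ [1, n]`. Its `Xⁿ` coefficient is the
residue of `e^{-mX} / (1 - e^{-X}) ^ (n + 1)`, which the substitution `u = 1 - e^{-X}` turns into
`(-1)ⁿ (m - 1).choose n = 0`. Formally: for `m = 1` the integrand is `f' / f ^ (n + 1)` with
`f = 1 - e^{-X}`, a derivative, and each further factor `e^{-X} = 1 - X · S` lowers `n` by one.
-/

theorem PowerSeries.coeff_X_mul_derivative {R : Type*} [CommSemiring R] (f : R⟦X⟧) (n : ℕ) :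
    coeff n (X * d⁄dX R f) = n * coeff n f := by
  cases n with
  | zero => simp
  | succ n => rw [coeff_succ_X_mul, coeff_derivative, mul_comm, Nat.cast_succ]

/-- For `f = X * S` with `S` a unit this is the vanishing of the residue of
`f' / f ^ (n + 1) = -(f⁻ⁿ)' / n`. -/
theorem PowerSeries.coeff_inv_pow_succ_mul_derivative_X_mul {K : Type*} [Field K] [CharZero K]
    {S : K⟦X⟧} (hS : constantCoeff S ≠ 0) {n : ℕ} (hn : n ≠ 0) :
    coeff n (S⁻¹ ^ (n + 1) * d⁄dX K (X * S)) = 0 := by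
  have hsplit : S⁻¹ ^ (n + 1) * d⁄dX K (X * S) = S⁻¹ ^ n + X * (S⁻¹ ^ (n + 1) * d⁄dX K S) := by
    rw [Derivation.leibniz, derivative_X, smul_eq_mul, smul_eq_mul, mul_one, pow_succ]
    linear_combination S⁻¹ ^ n * PowerSeries.inv_mul_cancel S hS
  have hderiv : X * d⁄dX K (S⁻¹ ^ n) = -(n • (X * (S⁻¹ ^ (n + 1) * d⁄dX K S))) := by
    obtain ⟨k, rfl⟩ := Nat.exists_eq_add_one_of_ne_zero hn
    rw [derivative_pow, derivative_inv', nsmul_eq_mul, Nat.add_sub_cancel]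
    ring
  have h := coeff_X_mul_derivative (S⁻¹ ^ n) n
  rw [hderiv, map_neg, map_nsmul, nsmul_eq_mul] at h
  have hcoeff : coeff n (X * (S⁻¹ ^ (n + 1) * d⁄dX K S)) = -coeff n (S⁻¹ ^ n) :=
    mul_left_cancel₀ (Nat.cast_ne_zero.mpr hn) (by linear_combination -h)
  rw [hsplit, map_add, hcoeff, add_neg_cancel]

noncomputable def oneSubExpNegDivX : ℚ⟦X⟧ :=
  mk fun m => (-1 : ℚ) ^ m / (m + 1).factorial

theorem tdSeries_eq_inv : tdSeries = oneSubExpNegDivX⁻¹ := rfl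

theorem constantCoeff_oneSubExpNegDivX : constantCoeff oneSubExpNegDivX = 1 := by
  simp [oneSubExpNegDivX, ← coeff_zero_eq_constantCoeff_apply]

theorem exp_neg_eq_one_sub_X_mul_oneSubExpNegDivX :
    evalNegHom (exp ℚ) = 1 - X * oneSubExpNegDivX := by
  ext n
  cases n with
  | zero => simp [evalNegHom, coeff_rescale, coeff_zero_X_mul, -coeff_zero_eq_constantCoeff]
  | succ n =>
    simp [coeff_succ_X_mul, oneSubExpNegDivX, evalNegHom, coeff_rescale, pow_succ]
    ring

theorem derivative_X_mul_oneSubExpNegDivX :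
    d⁄dX ℚ (X * oneSubExpNegDivX) = evalNegHom (exp ℚ) := by
  ext n
  rw [coeff_derivative, coeff_succ_X_mul]
  simp [oneSubExpNegDivX, evalNegHom, coeff_rescale, Nat.factorial_succ]
  field_simp

theorem tdSeries_mul_oneSubExpNegDivX : tdSeries * oneSubExpNegDivX = 1 :=
  PowerSeries.inv_mul_cancel oneSubExpNegDivX (constantCoeff_oneSubExpNegDivX ▸ one_ne_zero)

theorem coeff_tdSeries_pow_mul_exp_neg_pow {m n : ℕ} (hm : 0 < m) (hmn : m ≤ n) :
    coeff n (tdSeries ^ (n + 1) * evalNegHom (exp ℚ) ^ m) = 0 := by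
  induction m, hm using Nat.le_induction generalizing n with
  | base =>
    rw [pow_one, ← derivative_X_mul_oneSubExpNegDivX, tdSeries_eq_inv]
    exact coeff_inv_pow_succ_mul_derivative_X_mul (constantCoeff_oneSubExpNegDivX ▸ one_ne_zero)
      (by omega)
  | succ m _ ih =>
    obtain ⟨n, rfl⟩ : ∃ k, n = k + 1 := ⟨n - 1, by omega⟩
    have hpeel : tdSeries ^ (n + 1 + 1) * evalNegHom (exp ℚ) ^ (m + 1) =
        tdSeries ^ (n + 1 + 1) * evalNegHom (exp ℚ) ^ m -
          X * (tdSeries ^ (n + 1) * evalNegHom (exp ℚ) ^ m) := by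
      linear_combination tdSeries ^ (n + 1 + 1) * evalNegHom (exp ℚ) ^ m *
          exp_neg_eq_one_sub_X_mul_oneSubExpNegDivX -
        X * tdSeries ^ (n + 1) * evalNegHom (exp ℚ) ^ m * tdSeries_mul_oneSubExpNegDivX
    rw [hpeel, map_sub, coeff_succ_X_mul, ih (by omega), ih (by omega), sub_zero]

theorem coeff_td_pow_exp_pow_vanishing (r p a : ℕ) (h : a > p) :
    PowerSeries.coeff (r + a)
      (tdSeries ^ (r + 1) * (PowerSeries.exp ℚ) ^ p * (tdSeries - PowerSeries.X) ^ a)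
      = 0 := by
  obtain ⟨b, rfl⟩ : ∃ b, a = p + b := ⟨a - p, by omega⟩
  have hreduce : tdSeries ^ (r + 1) * exp ℚ ^ p * (tdSeries - X) ^ (p + b) =
      tdSeries ^ (r + (p + b) + 1) * evalNegHom (exp ℚ) ^ b := by
    rw [tdSeries_sub_X]
    calc _ = tdSeries ^ (r + (p + b) + 1) * (exp ℚ * evalNegHom (exp ℚ)) ^ p *
          evalNegHom (exp ℚ) ^ b := by ring
      _ = _ := by rw [exp_mul_exp_neg_eq_one, one_pow, mul_one]
  rw [hreduce]
  exact coeff_tdSeries_pow_mul_exp_neg_pow (by omega) (by omega)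
end

section
/- Let K be a symmetric invertible real (k+1)×(k+1) matrix and let i be an index. Let K' denote the k×k principal submatrix of K obtained by deleting the i-th row and i-th column, and assume K' is also invertible. Write |M| for the sum of all entries of a matrix M, and C_i = Σ_j (K⁻¹)_{ij} for the i-th row sum of K⁻¹. Then (det(K')/det(K)) · ( |K⁻¹| − |K'⁻¹| ) = C_i². -/
/-!
Write `M = K⁻¹` and `d = M i i`, which equals `det K' / det K` by the cofactor formula.
Inverting `K'` by its Schur complement in `K` gives `K'⁻¹ = M' - d⁻¹ • u vᵀ`, where `M'` is `M`
with row and column `i` deleted and `u`, `v` are the rest of column and row `i` of `M`.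
Splitting the entry sum of `M` along row and column `i` then gives `d * (|M| - |K'⁻¹|) = r * c`
for the `i`-th row sum `r` and column sum `c` of `M`, and `r = c` by symmetry.
-/

open Matrix Finset

namespace Matrix

variable {R : Type*} {n : ℕ}

theorem mul_apply_eq_add_sum_succAbove [NonUnitalNonAssocSemiring R]
    (A B : Matrix (Fin (n + 1)) (Fin (n + 1)) R) (i r j : Fin (n + 1)) :
    (A * B) r j = A r i * B i j + ∑ c, A r (i.succAbove c) * B (i.succAbove c) j := by
  rw [mul_apply, Fin.sum_univ_succAbove _ i]

theorem sum_sum_eq_add_sum_sum_submatrix_succAbove [AddCommGroup R]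
    (M : Matrix (Fin (n + 1)) (Fin (n + 1)) R) (i : Fin (n + 1)) :
    ∑ a, ∑ b, M a b = ∑ j, M i j + ∑ j, M j i - M i i
      + ∑ a, ∑ b, M.submatrix i.succAbove i.succAbove a b := by
  simp only [Fin.sum_univ_succAbove _ i, sum_add_distrib, submatrix_apply]
  abel

theorem sum_sum_vecMulVec [NonUnitalNonAssocSemiring R] {m l : Type*} [Fintype m] [Fintype l]
    (u : m → R) (v : l → R) : ∑ a, ∑ b, vecMulVec u v a b = (∑ a, u a) * ∑ b, v b := by
  simp only [vecMulVec_apply, ← mul_sum, sum_mul]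

variable [Field R]

theorem inv_apply_self_eq_det_submatrix_div (K : Matrix (Fin (n + 1)) (Fin (n + 1)) R)
    (i : Fin (n + 1)) : K⁻¹ i i = (K.submatrix i.succAbove i.succAbove).det / K.det := by
  rw [inv_def, smul_apply, adjugate_fin_succ_eq_det_submatrix, ← two_mul, pow_mul, neg_one_sq,
    one_pow, one_mul, Ring.inverse_eq_inv, smul_eq_mul, inv_mul_eq_div]

theorem inv_submatrix_succAbove (K : Matrix (Fin (n + 1)) (Fin (n + 1)) R) (hK : K.det ≠ 0)
    (i : Fin (n + 1)) (hi : K⁻¹ i i ≠ 0) :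
    (K.submatrix i.succAbove i.succAbove)⁻¹ = K⁻¹.submatrix i.succAbove i.succAbove -
      (K⁻¹ i i)⁻¹ •
        vecMulVec (fun a => K⁻¹ (i.succAbove a) i) (fun b => K⁻¹ i (i.succAbove b)) := by
  have hmul_inv : K * K⁻¹ = 1 := mul_nonsing_inv K (isUnit_iff_ne_zero.2 hK)
  refine inv_eq_right_inv ?_
  rw [Matrix.mul_sub, Matrix.mul_smul, mul_vecMulVec]
  ext a b
  have hcol : (K.submatrix i.succAbove i.succAbove *ᵥ fun c => K⁻¹ (i.succAbove c) i) a
      = - K (i.succAbove a) i * K⁻¹ i i := by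
    have := mul_apply_eq_add_sum_succAbove K K⁻¹ i (i.succAbove a) i
    rw [hmul_inv, one_apply_ne (Fin.succAbove_ne i a)] at this
    simp only [mulVec, dotProduct, submatrix_apply]
    linear_combination -this
  have hsub := mul_apply_eq_add_sum_succAbove K K⁻¹ i (i.succAbove a) (i.succAbove b)
  simp only [hmul_inv, one_apply, Fin.succAbove_right_inj] at hsub
  simp only [sub_apply, smul_apply, vecMulVec_apply, hcol, mul_apply, submatrix_apply,
    smul_eq_mul, one_apply]
  rw [hsub]
  field_simp
  ring

theorem det_submatrix_div_det_mul_sum_sum_inv_sub (K : Matrix (Fin (n + 1)) (Fin (n + 1)) R)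
    (hK : K.det ≠ 0) (i : Fin (n + 1)) (hK' : (K.submatrix i.succAbove i.succAbove).det ≠ 0) :
    ((K.submatrix i.succAbove i.succAbove).det / K.det) *
        ((∑ a, ∑ b, K⁻¹ a b) - ∑ a, ∑ b, (K.submatrix i.succAbove i.succAbove)⁻¹ a b)
      = (∑ j, K⁻¹ i j) * ∑ j, K⁻¹ j i := by
  have hd : K⁻¹ i i ≠ 0 := by
    rw [inv_apply_self_eq_det_submatrix_div]; exact div_ne_zero hK' hK
  rw [← inv_apply_self_eq_det_submatrix_div, inv_submatrix_succAbove K hK i hd,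
    sum_sum_eq_add_sum_sum_submatrix_succAbove K⁻¹ i]
  simp only [sub_apply, smul_apply, smul_eq_mul, sum_sub_distrib, ← mul_sum, sum_sum_vecMulVec,
    Fin.sum_univ_succAbove _ i]
  field_simp
  ring

end Matrix

theorem det_ratio_entry_sum_diff_eq_rowsum_sq (k : ℕ)
    (K : Matrix (Fin (k + 1)) (Fin (k + 1)) ℝ)
    (hsymm : K.IsSymm) (hK : K.det ≠ 0) (i : Fin (k + 1))
    (hK' : (K.submatrix i.succAbove i.succAbove).det ≠ 0) :
    ((K.submatrix i.succAbove i.succAbove).det / K.det) *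
        ((∑ a, ∑ b, K⁻¹ a b) - ∑ a, ∑ b, (K.submatrix i.succAbove i.succAbove)⁻¹ a b)
      = (∑ j, K⁻¹ i j) ^ 2 := by
  have hcol : ∑ j, K⁻¹ j i = ∑ j, K⁻¹ i j := sum_congr rfl fun j _ => hsymm.inv.apply i j
  rw [det_submatrix_div_det_mul_sum_sum_inv_sub K hK i hK', hcol, sq]
end

section
/- Let n ≥ 1 and let K be a real n×n matrix. In the exterior algebra Λ(ℝ^{2n}) with standard basis e_1,…,e_{2n}, write ψ_i = ι(e_i) and ψ̄_i = ι(e_{n+i}) for 1 ≤ i ≤ n, and set Q = Σ_{i,j} K_{ij} ψ̄_i ∧ ψ_j. Then the n-th power of Q satisfies Q^n = n! · det(K) · Ω, where Ω = ψ̄_1 ∧ ψ_1 ∧ ψ̄_2 ∧ ψ_2 ∧ ⋯ ∧ ψ̄_n ∧ ψ_n. -/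
/-!
With `b i j = ψ̄_i ψ_j`, products of two generators commute, so everything happens in a
commutative subalgebra in which `b i j * b i j' = 0`, `b i j * b i' j = 0` and
`b i j * b i' j' = -(b i j' * b i' j)`. Writing `Q = ∑ i, x i` with `x i = ∑ j, K i j • b i j`,
each `x i` squares to zero, so `Q ^ n = n! • ∏ i, x i`. Expanding the product, only the terms
indexed by permutations `σ` survive, each equal to `sign σ • (∏ i, K i (σ i)) • ∏ i, b i i`;
they add up to `det K • ∏ i, b i i`.
-/

section

open Finset Equiv

theorem Fintype.prod_eq_mul_mul_prod_compl {ι M : Type*} [Fintype ι] [DecidableEq ι]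
    [CommMonoid M] {k₁ k₂ : ι} (h : k₁ ≠ k₂) (f : ι → M) :
    ∏ k, f k = f k₁ * f k₂ * ∏ k ∈ {k₁, k₂}ᶜ, f k := by
  rw [← prod_pair h, prod_mul_prod_compl]

theorem Fintype.prod_eq_zero_of_mul_eq_zero {ι M : Type*} [Fintype ι] [CommMonoidWithZero M]
    {k₁ k₂ : ι} (h : k₁ ≠ k₂) {f : ι → M} (hf : f k₁ * f k₂ = 0) : ∏ k, f k = 0 := by
  classical
  rw [Fintype.prod_eq_mul_mul_prod_compl h, hf, zero_mul]

theorem Fintype.sum_fun_eq_sum_equiv {α β M : Type*} [Fintype α] [Fintype β] [DecidableEq α]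
    [DecidableEq β] [AddCommMonoid M] (hcard : Fintype.card α = Fintype.card β)
    (F : (α → β) → M) (hF : ∀ p, ¬ Function.Injective p → F p = 0) :
    ∑ p, F p = ∑ e : α ≃ β, F e := by
  refine (Fintype.sum_of_injective (fun e : α ≃ β => ⇑e) DFunLike.coe_injective _ _
    (fun p hp => hF p fun hinj => hp ?_) fun _ => rfl).symm
  exact ⟨Equiv.ofBijective p ((Fintype.bijective_iff_injective_and_card p).2 ⟨hinj, hcard⟩), rfl⟩

theorem sum_pow_card_eq_factorial_smul_prod {ι A : Type*} [Fintype ι] [DecidableEq ι]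
    [CommSemiring A]
    (x : ι → A) (hx : ∀ i, x i * x i = 0) :
    (∑ i, x i) ^ Fintype.card ι = (Fintype.card ι).factorial • ∏ i, x i := by
  have hcard : Fintype.card (Fin (Fintype.card ι)) = Fintype.card ι := Fintype.card_fin _
  rw [Fintype.sum_pow, Fintype.sum_fun_eq_sum_equiv hcard]
  · simp_rw [Equiv.prod_comp]
    rw [sum_const, card_univ, Fintype.card_equiv (Fintype.equivFin ι).symm, hcard]
  · intro p hp
    obtain ⟨k₁, k₂, hp, hne⟩ := Function.not_injective_iff.1 hp
    exact Fintype.prod_eq_zero_of_mul_eq_zero hne (by rw [hp, hx])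

variable {R A : Type*} [CommRing R] [CommRing A] [Algebra R A] {n : Type*} [Fintype n]
  [DecidableEq n]

theorem prod_perm_eq_sign_smul_prod (b : n → n → A)
    (hswap : ∀ i i' j j', b i j * b i' j' = -(b i j' * b i' j)) (σ : Perm n) :
    ∏ i, b i (σ i) = Perm.sign σ • ∏ i, b i i := by
  induction σ using Perm.swap_induction_on' with
  | one => simp
  | mul_swap σ x y hxy ih =>
    have hcompl : ∀ k ∈ ({x, y} : Finset n)ᶜ, b k ((σ * swap x y) k) = b k (σ k) := by
      intro k hk
      simp only [mem_compl, mem_insert, mem_singleton, not_or] at hk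
      rw [Perm.mul_apply, swap_apply_of_ne_of_ne hk.1 hk.2]
    rw [Fintype.prod_eq_mul_mul_prod_compl hxy, prod_congr rfl hcompl, Perm.mul_apply,
      Perm.mul_apply, swap_apply_left, swap_apply_right, hswap, neg_mul,
      ← Fintype.prod_eq_mul_mul_prod_compl hxy fun k => b k (σ k), ih, Perm.sign_mul,
      Perm.sign_swap hxy, mul_neg_one, Units.neg_smul]

theorem prod_sum_smul_eq_det_smul_prod (K : Matrix n n R) (b : n → n → A)
    (hcol : ∀ i i' j, b i j * b i' j = 0)
    (hswap : ∀ i i' j j', b i j * b i' j' = -(b i j' * b i' j)) :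
    ∏ i, ∑ j, K i j • b i j = K.det • ∏ i, b i i := by
  rw [Finset.prod_univ_sum, Fintype.piFinset_univ]
  simp_rw [prod_smul]
  rw [Fintype.sum_fun_eq_sum_equiv rfl]
  · change ∑ σ : Perm n, _ = _
    rw [← Matrix.det_transpose, Matrix.det_apply, sum_smul]
    refine sum_congr rfl fun σ _ => ?_
    rw [prod_perm_eq_sign_smul_prod b hswap, smul_assoc, smul_comm]
    rfl
  · intro p hp
    obtain ⟨k₁, k₂, hp, hne⟩ := Function.not_injective_iff.1 hp
    rw [Fintype.prod_eq_zero_of_mul_eq_zero (f := fun i => b i (p i)) hne (by rw [hp, hcol]),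
      smul_zero]

end

namespace ExteriorAlgebra

open Finset

variable {R M : Type*} [CommRing R] [AddCommGroup M] [Module R M]

theorem ι_mul_ι_comm (a b : M) : ι R a * ι R b = -(ι R b * ι R a) :=
  eq_neg_of_add_eq_zero_left (ι_add_mul_swap a b)

theorem commute_ι_ι_mul_ι (a b c : M) : Commute (ι R a) (ι R b * ι R c) := by
  rw [Commute, SemiconjBy, ← mul_assoc, ι_mul_ι_comm a b, neg_mul, mul_assoc, ι_mul_ι_comm a c,
    mul_neg, neg_neg, mul_assoc]

theorem commute_ι_mul_ι (a b c d : M) : Commute (ι R a * ι R b) (ι R c * ι R d) :=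
  (commute_ι_ι_mul_ι a c d).mul_left (commute_ι_ι_mul_ι b c d)

theorem ι_mul_ι_mul_ι_mul_ι (a b c d : M) :
    ι R a * ι R b * (ι R c * ι R d) = ι R a * ι R c * (ι R d * ι R b) := by
  rw [mul_assoc, (commute_ι_ι_mul_ι b c d).eq]
  simp only [mul_assoc]

theorem ι_mul_ι_mul_ι_mul_ι_self_left (a b d : M) :
    ι R a * ι R b * (ι R a * ι R d) = 0 := by
  rw [ι_mul_ι_mul_ι_mul_ι, ι_sq_zero, zero_mul]

theorem ι_mul_ι_mul_ι_mul_ι_self_right (a b c : M) :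
    ι R a * ι R b * (ι R c * ι R b) = 0 := by
  rw [ι_mul_ι_mul_ι_mul_ι, ι_sq_zero, mul_zero]

theorem ι_mul_ι_mul_ι_mul_ι_swap (a b c d : M) :
    ι R a * ι R b * (ι R c * ι R d) = -(ι R a * ι R d * (ι R c * ι R b)) := by
  rw [ι_mul_ι_mul_ι_mul_ι, ι_mul_ι_mul_ι_mul_ι a d, ι_mul_ι_comm b d, mul_neg, neg_neg]

variable (R M) in
def bivectorSubalgebra : Subalgebra R (ExteriorAlgebra R M) :=
  Algebra.adjoin R (Set.range fun p : M × M => ι R p.1 * ι R p.2)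

instance : IsMulCommutative (bivectorSubalgebra R M) :=
  Algebra.isMulCommutative_adjoin R <| by
    rintro _ ⟨⟨a, b⟩, rfl⟩ _ ⟨⟨c, d⟩, rfl⟩
    exact commute_ι_mul_ι a b c d

open scoped IsMulCommutative

theorem sum_smul_ι_mul_ι_pow {n : ℕ} (K : Matrix (Fin n) (Fin n) R) (u v : Fin n → M) :
    (∑ i, ∑ j, K i j • (ι R (u i) * ι R (v j))) ^ n =
      ((n.factorial : R) * K.det) •
        ((List.finRange n).map fun i => ι R (u i) * ι R (v i)).prod := by
  let b (i j : Fin n) : bivectorSubalgebra R M :=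
    ⟨ι R (u i) * ι R (v j), Algebra.subset_adjoin ⟨(u i, v j), rfl⟩⟩
  have hsame (i j j' : Fin n) : b i j * b i j' = 0 :=
    Subtype.ext (ι_mul_ι_mul_ι_mul_ι_self_left _ _ _)
  have hrow (i : Fin n) : (∑ j, K i j • b i j) * ∑ j, K i j • b i j = 0 := by
    rw [sum_mul_sum]
    refine sum_eq_zero fun j _ => sum_eq_zero fun j' _ => ?_
    rw [smul_mul_smul_comm, hsame, smul_zero]
  have hcol (i i' j : Fin n) : b i j * b i' j = 0 :=
    Subtype.ext (ι_mul_ι_mul_ι_mul_ι_self_right _ _ _)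
  have hswap (i i' j j' : Fin n) : b i j * b i' j' = -(b i j' * b i' j) :=
    Subtype.ext (ι_mul_ι_mul_ι_mul_ι_swap _ _ _ _)
  have key : (∑ i, ∑ j, K i j • b i j) ^ n = ((n.factorial : R) * K.det) • ∏ i, b i i := by
    have hpow := sum_pow_card_eq_factorial_smul_prod _ hrow
    rw [Fintype.card_fin] at hpow
    rw [hpow, prod_sum_smul_eq_det_smul_prod K b hcol hswap, mul_smul, Nat.cast_smul_eq_nsmul]
  have hval := congrArg (bivectorSubalgebra R M).val key
  simp only [map_pow, map_sum, map_smul, Fin.prod_univ_def, map_list_prod, List.map_map] at hval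
  exact hval

end ExteriorAlgebra

open ExteriorAlgebra

theorem grassmann_gaussian_top_power (n : ℕ)
    (K : Matrix (Fin n) (Fin n) ℝ) :
    let ψ : Fin n → ExteriorAlgebra ℝ (Fin (2 * n) → ℝ) :=
      fun i => ι ℝ (Pi.single (⟨i.val, by have := i.2; omega⟩ : Fin (2 * n)) (1 : ℝ))
    let ψbar : Fin n → ExteriorAlgebra ℝ (Fin (2 * n) → ℝ) :=
      fun i => ι ℝ (Pi.single (⟨n + i.val, by have := i.2; omega⟩ : Fin (2 * n)) (1 : ℝ))
    let Q : ExteriorAlgebra ℝ (Fin (2 * n) → ℝ) :=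
      ∑ i : Fin n, ∑ j : Fin n, K i j • (ψbar i * ψ j)
    let Ω : ExteriorAlgebra ℝ (Fin (2 * n) → ℝ) :=
      ((List.finRange n).map fun i => ψbar i * ψ i).prod
    Q ^ n = ((n.factorial : ℝ) * K.det) • Ω := by
  intro ψ ψbar Q Ω
  exact sum_smul_ι_mul_ι_pow K _ _
end

section
/- Let τ be a symmetric g×g complex matrix such that τ − τ̄ is invertible (τ̄ the entrywise complex conjugate), and set B = −i(τ − τ̄)⁻¹. Let A be a symmetric real k×k matrix. Let V be a complex vector space and let α_i^r, β_i^r ∈ V for 1 ≤ i ≤ k, 1 ≤ r ≤ g be arbitrary vectors; in the exterior algebra Λ_ℂ(V) set ω_i^r = α_i^r + Σ_s τ_{rs} β_i^s and ω̄_i^r = α_i^r + Σ_s τ̄_{rs} β_i^s (images under the inclusion ι). Then Σ_{i,j} A_{ij} Σ_{r,s} B_{rs} (ω_i^r ∧ ω̄_j^s) = i · Σ_{i,j} A_{ij} Σ_r (α_i^r ∧ β_j^r), where i denotes the imaginary unit acting as a scalar of Λ_ℂ(V). -/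
/-!
Write `ω = α + τ β` and `ω̄ = α + τ̄ β`, so that the left-hand side splits into four sums of the
shape `∑ A_ij C_rs x_i^r ∧ y_j^s`. Because `∧` anticommutes on `ι(V)` and `A` is symmetric, such a
sum with `x = y` vanishes as soon as `C` is symmetric. This kills the `α α` term (`B` is symmetric)
and the `β β` term (`τ B τ̄ = τ B τ + i τ` is symmetric), while the two mixed terms combine into the
sum with `C = B τ̄ - B τ = i · 1`.
-/

lemma eq_zero_of_eq_neg_of_invertible_two {K M : Type*} [Semiring K] [Invertible (2 : K)]
    [AddCommGroup M] [Module K M] {v : M} (h : v = -v) : v = 0 := by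
  have h2 : (2 : K) • v = 0 := by rw [two_smul]; nth_rewrite 2 [h]; exact add_neg_cancel v
  rw [← one_smul K v, ← invOf_mul_self (2 : K), mul_smul, h2, smul_zero]

namespace Matrix

variable {K R m n : Type*} [CommRing K] [Ring R] [Algebra K R] [Fintype m] [Fintype n]

def pairing (C : Matrix n n K) (x y : n → R) : R :=
  ∑ r, ∑ s, C r s • (x r * y s)

def kronPairing (A : Matrix m m K) (C : Matrix n n K) (x y : m → n → R) : R :=
  ∑ i, ∑ j, A i j • C.pairing (x i) (y j)

def mulVecRows (τ : Matrix n n K) (x : m → n → R) : m → n → R :=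
  fun i r => ∑ t, τ r t • x i t

lemma pairing_add_left (C : Matrix n n K) (x x' y : n → R) :
    C.pairing (x + x') y = C.pairing x y + C.pairing x' y := by
  simp only [pairing, Pi.add_apply, add_mul, smul_add, Finset.sum_add_distrib]

lemma pairing_add_right (C : Matrix n n K) (x y y' : n → R) :
    C.pairing x (y + y') = C.pairing x y + C.pairing x y' := by
  simp only [pairing, Pi.add_apply, mul_add, smul_add, Finset.sum_add_distrib]

lemma sub_pairing (C C' : Matrix n n K) (x y : n → R) :
    (C - C').pairing x y = C.pairing x y - C'.pairing x y := by
  simp only [pairing, sub_apply, sub_smul, Finset.sum_sub_distrib]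

lemma pairing_smul_one [DecidableEq n] (c : K) (x y : n → R) :
    (c • (1 : Matrix n n K)).pairing x y = c • ∑ r, x r * y r := by
  simp [pairing, one_apply, ite_smul, Finset.smul_sum]

lemma pairing_mulVec_left (C τ : Matrix n n K) (x y : n → R) :
    C.pairing (fun r => ∑ t, τ r t • x t) y = (τᵀ * C).pairing x y := by
  simp only [pairing, mul_apply, transpose_apply, Finset.sum_mul, Finset.sum_smul, smul_mul_assoc,
    Finset.smul_sum, smul_smul, mul_comm (C _ _)]
  rw [Finset.sum_comm]
  conv_lhs => enter [2, s]; rw [Finset.sum_comm]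
  rw [Finset.sum_comm]

lemma pairing_mulVec_right (C τ : Matrix n n K) (x y : n → R) :
    C.pairing x (fun s => ∑ u, τ s u • y u) = (C * τ).pairing x y := by
  simp only [pairing, mul_apply, Finset.mul_sum, Finset.sum_smul, mul_smul_comm,
    Finset.smul_sum, smul_smul]
  exact Finset.sum_congr rfl fun r _ => Finset.sum_comm

lemma pairing_swap (C : Matrix n n K) {x y : n → R}
    (hxy : ∀ r s, y r * x s = -(x s * y r)) :
    C.pairing y x = -Cᵀ.pairing x y := by
  rw [pairing, pairing, Finset.sum_comm, ← Finset.sum_neg_distrib]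
  refine Finset.sum_congr rfl fun s _ => ?_
  rw [← Finset.sum_neg_distrib]
  refine Finset.sum_congr rfl fun r _ => ?_
  rw [hxy, smul_neg, transpose_apply]

lemma kronPairing_add_left (A : Matrix m m K) (C : Matrix n n K) (x x' y : m → n → R) :
    kronPairing A C (x + x') y = kronPairing A C x y + kronPairing A C x' y := by
  simp only [kronPairing, Pi.add_apply, pairing_add_left, smul_add, Finset.sum_add_distrib]

lemma kronPairing_add_right (A : Matrix m m K) (C : Matrix n n K) (x y y' : m → n → R) :
    kronPairing A C x (y + y') = kronPairing A C x y + kronPairing A C x y' := by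
  simp only [kronPairing, Pi.add_apply, pairing_add_right, smul_add, Finset.sum_add_distrib]

lemma kronPairing_sub (A : Matrix m m K) (C C' : Matrix n n K) (x y : m → n → R) :
    kronPairing A (C - C') x y = kronPairing A C x y - kronPairing A C' x y := by
  simp only [kronPairing, sub_pairing, smul_sub, Finset.sum_sub_distrib]

lemma kronPairing_smul_one [DecidableEq n] (A : Matrix m m K) (c : K) (x y : m → n → R) :
    kronPairing A (c • 1) x y = c • ∑ i, ∑ j, A i j • ∑ r, x i r * y j r := by
  simp only [kronPairing, pairing_smul_one, smul_comm (A _ _) c, Finset.smul_sum]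

lemma kronPairing_mulVecRows_left (A : Matrix m m K) (C τ : Matrix n n K) (x y : m → n → R) :
    kronPairing A C (mulVecRows τ x) y = kronPairing A (τᵀ * C) x y := by
  simp only [kronPairing, ← pairing_mulVec_left]
  rfl

lemma kronPairing_mulVecRows_right (A : Matrix m m K) (C τ : Matrix n n K) (x y : m → n → R) :
    kronPairing A C x (mulVecRows τ y) = kronPairing A (C * τ) x y := by
  simp only [kronPairing, ← pairing_mulVec_right]
  rfl

lemma kronPairing_swap {A : Matrix m m K} (hA : A.IsSymm) (C : Matrix n n K) {x y : m → n → R}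
    (hxy : ∀ i r j s, y i r * x j s = -(x j s * y i r)) :
    kronPairing A C y x = -kronPairing A Cᵀ x y := by
  rw [kronPairing, kronPairing, Finset.sum_comm, ← Finset.sum_neg_distrib]
  refine Finset.sum_congr rfl fun j _ => ?_
  rw [← Finset.sum_neg_distrib]
  refine Finset.sum_congr rfl fun i _ => ?_
  rw [pairing_swap C (hxy i · j ·), smul_neg, hA.apply]

lemma kronPairing_self_eq_zero [Invertible (2 : K)] {A : Matrix m m K} (hA : A.IsSymm)
    {C : Matrix n n K} (hC : C.IsSymm) {x : m → n → R}
    (hx : ∀ i r j s, x i r * x j s = -(x j s * x i r)) :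
    kronPairing A C x x = 0 := by
  refine eq_zero_of_eq_neg_of_invertible_two (K := K) ?_
  conv_lhs => rw [kronPairing_swap hA C hx, hC.eq]

theorem kronPairing_add_mulVecRows [Invertible (2 : K)] {A : Matrix m m K}
    (hA : A.IsSymm) {B τ τ' : Matrix n n K} (hB : B.IsSymm) (hτBτ' : (τᵀ * B * τ').IsSymm)
    {a b : m → n → R} (haa : ∀ i r j s, a i r * a j s = -(a j s * a i r))
    (hbb : ∀ i r j s, b i r * b j s = -(b j s * b i r))
    (hba : ∀ i r j s, b i r * a j s = -(a j s * b i r)) :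
    kronPairing A B (a + mulVecRows τ b) (a + mulVecRows τ' b) =
      kronPairing A (B * τ' - B * τ) a b := by
  rw [kronPairing_add_left, kronPairing_add_right, kronPairing_add_right,
    kronPairing_mulVecRows_right, kronPairing_mulVecRows_left, kronPairing_mulVecRows_left,
    kronPairing_mulVecRows_right, kronPairing_self_eq_zero hA hB haa,
    kronPairing_self_eq_zero hA hτBτ' hbb, kronPairing_swap hA _ hba, transpose_mul,
    transpose_transpose, hB.eq, kronPairing_sub]
  abel

lemma IsSymm.mul_inv_sub_mul [DecidableEq n] {τ τ' : Matrix n n K} (hτ : τ.IsSymm)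
    (hτ' : τ'.IsSymm) (h : IsUnit (τ - τ').det) : (τ * (τ - τ')⁻¹ * τ').IsSymm := by
  have hM : (τ - τ')⁻¹.IsSymm := (hτ.sub hτ').inv
  have key : τ * (τ - τ')⁻¹ * τ' = τ * (τ - τ')⁻¹ * τ - τ :=
    calc τ * (τ - τ')⁻¹ * τ' = τ * (τ - τ')⁻¹ * (τ - (τ - τ')) := by rw [sub_sub_cancel]
      _ = τ * (τ - τ')⁻¹ * τ - τ := by
        rw [Matrix.mul_sub, Matrix.mul_assoc τ _ (τ - τ'), nonsing_inv_mul _ h, Matrix.mul_one]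
  rw [key]
  refine IsSymm.sub ?_ hτ
  rw [IsSymm, transpose_mul, transpose_mul, hτ.eq, hM.eq, Matrix.mul_assoc]

end Matrix

open scoped Matrix

open ExteriorAlgebra

theorem nef_form_rewriting (g k : ℕ)
    (τ : Matrix (Fin g) (Fin g) ℂ) (hτ : τ.IsSymm)
    (hinv : IsUnit (τ - τ.map (starRingEnd ℂ)))
    (A : Matrix (Fin k) (Fin k) ℝ) (hA : A.IsSymm)
    (V : Type*) [AddCommGroup V] [Module ℂ V]
    (α β : Fin k → Fin g → V) :
    let B : Matrix (Fin g) (Fin g) ℂ :=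
      (-Complex.I) • (τ - τ.map (starRingEnd ℂ))⁻¹
    let ω : Fin k → Fin g → ExteriorAlgebra ℂ V :=
      fun i r => ι ℂ (α i r) + ∑ s, τ r s • ι ℂ (β i s)
    let ωbar : Fin k → Fin g → ExteriorAlgebra ℂ V :=
      fun i r => ι ℂ (α i r) + ∑ s, (starRingEnd ℂ) (τ r s) • ι ℂ (β i s)
    ∑ i, ∑ j, (A i j : ℂ) • ∑ r, ∑ s, B r s • (ω i r * ωbar j s)
      = Complex.I • ∑ i, ∑ j, (A i j : ℂ) • ∑ r, ι ℂ (α i r) * ι ℂ (β j r) := by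
  intro B ω ωbar
  set τbar := τ.map (starRingEnd ℂ)
  have hdet : IsUnit (τ - τbar).det := (Matrix.isUnit_iff_isUnit_det _).mp hinv
  have hB : B.IsSymm := (hτ.sub (hτ.map _)).inv.smul _
  have hBτ : B * τbar - B * τ = Complex.I • 1 := by
    rw [← Matrix.mul_sub, ← neg_sub, Matrix.mul_neg, Matrix.smul_mul,
      Matrix.nonsing_inv_mul _ hdet, neg_smul, neg_neg]
  have hτBτ : (τᵀ * B * τbar).IsSymm := by
    rw [hτ.eq, Matrix.mul_smul, Matrix.smul_mul]
    exact (hτ.mul_inv_sub_mul (hτ.map _) hdet).smul _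
  have hι : ∀ x y : V, ι ℂ x * ι ℂ y = -(ι ℂ y * ι ℂ x) :=
    fun x y => eq_neg_of_add_eq_zero_left (ι_add_mul_swap x y)
  have h := Matrix.kronPairing_add_mulVecRows (hA.map Complex.ofReal) hB hτBτ
    (a := fun i r => ι ℂ (α i r)) (b := fun i r => ι ℂ (β i r))
    (fun _ _ _ _ => hι _ _) (fun _ _ _ _ => hι _ _) (fun _ _ _ _ => hι _ _)
  rwa [hBτ, Matrix.kronPairing_smul_one] at h
end
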